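/- For any Parseval frame Ψ = {ψ_i}_{i=1}^M for F^N, the total coherence satisfies ∑_{i≠j} |⟨ψ_i,ψ_j⟩| ≤ sqrt(N(M−N)(M−1)). -/

import Mathlib

/-!
The Gram matrix `P = Ψᴴ Ψ` of a Parseval frame is an orthogonal projection of trace `N`, so its
squared Frobenius norm `∑ |P i j|²` equals `N`. By Cauchy–Schwarz the diagonal alone carries at
least `N² / M` of it, leaving at most `N (M - N) / M` for the `M (M - 1)` off-diagonal entries;
Cauchy–Schwarz once more bounds their absolute sum by `√(N (M - N) (M - 1))`.
-/

open Matrix Finset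

noncomputable def totalCoherence {N M : ℕ} (Φ : Matrix (Fin N) (Fin M) ℂ) : ℝ :=
  ∑ i, ∑ j ∈ Finset.univ.erase i, ‖(Φᴴ * Φ) i j‖

theorem sq_sum_sum_erase_le {ι : Type*} [Fintype ι] [DecidableEq ι] (f : ι → ι → ℝ) :
    (∑ i, ∑ j ∈ univ.erase i, f i j) ^ 2 ≤
      Fintype.card ι * (Fintype.card ι - 1) * ∑ i, ∑ j ∈ univ.erase i, f i j ^ 2 := by
  rcases isEmpty_or_nonempty ι with _ | _
  · simp
  have hcard : #(univ.sigma fun i : ι => univ.erase i) =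
      (Fintype.card ι : ℝ) * (Fintype.card ι - 1) := by
    simp [card_sigma, card_erase_of_mem, Nat.cast_sub Fintype.card_pos]
  simpa only [sum_sigma, hcard] using
    sq_sum_le_card_mul_sum_sq (s := univ.sigma fun i : ι => univ.erase i) (f := fun p => f p.1 p.2)

namespace Matrix

variable {𝕜 n : Type*} [RCLike 𝕜] [Fintype n]

theorem re_trace_mul_conjTranspose_self {m : Type*} [Fintype m] (A : Matrix m n 𝕜) :
    RCLike.re (A * Aᴴ).trace = ∑ i, ∑ j, ‖A i j‖ ^ 2 := by
  simp only [trace, diag_apply, mul_apply, conjTranspose_apply, RCLike.star_def, RCLike.mul_conj]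
  simp only [map_sum, ← RCLike.ofReal_pow, RCLike.ofReal_re]

theorem sum_sum_norm_sq_eq_re_trace_of_isHermitian_of_mul_self {P : Matrix n n 𝕜}
    (hH : P.IsHermitian) (hP : P * P = P) :
    ∑ i, ∑ j, ‖P i j‖ ^ 2 = RCLike.re P.trace := by
  rw [← re_trace_mul_conjTranspose_self, hH.eq, hP]

theorem sq_re_trace_le_card_mul_sum_norm_diag_sq (P : Matrix n n 𝕜)
    (h : 0 ≤ RCLike.re P.trace) :
    RCLike.re P.trace ^ 2 ≤ Fintype.card n * ∑ i, ‖P i i‖ ^ 2 := by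
  have hle : RCLike.re P.trace ≤ ∑ i, ‖P i i‖ := by
    simpa [trace] using sum_le_sum fun i _ => RCLike.re_le_norm (P i i)
  calc RCLike.re P.trace ^ 2 ≤ (∑ i, ‖P i i‖) ^ 2 := pow_le_pow_left₀ h hle 2
    _ ≤ _ := by simpa using sq_sum_le_card_mul_sum_sq (s := univ) (f := fun i => ‖P i i‖)

variable [DecidableEq n] {P : Matrix n n 𝕜}

theorem card_mul_sum_sum_erase_norm_sq_le (hH : P.IsHermitian) (hP : P * P = P) :
    Fintype.card n * ∑ i, ∑ j ∈ univ.erase i, ‖P i j‖ ^ 2 ≤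
      RCLike.re P.trace * (Fintype.card n - RCLike.re P.trace) := by
  have htotal := sum_sum_norm_sq_eq_re_trace_of_isHermitian_of_mul_self hH hP
  have hsplit : ∑ i, ∑ j, ‖P i j‖ ^ 2 =
      ∑ i, ‖P i i‖ ^ 2 + ∑ i, ∑ j ∈ univ.erase i, ‖P i j‖ ^ 2 := by
    rw [← sum_add_distrib]
    exact sum_congr rfl fun i _ => (add_sum_erase _ _ (mem_univ i)).symm
  have hdiag := sq_re_trace_le_card_mul_sum_norm_diag_sq P (htotal ▸ by positivity)
  nlinarith

theorem sum_sum_erase_norm_le_of_isHermitian_of_mul_self (hH : P.IsHermitian)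
    (hP : P * P = P) :
    ∑ i, ∑ j ∈ univ.erase i, ‖P i j‖ ≤
      √(RCLike.re P.trace * (Fintype.card n - RCLike.re P.trace) * (Fintype.card n - 1)) := by
  rcases isEmpty_or_nonempty n with _ | _
  · simp
  have hcard : (1 : ℝ) ≤ Fintype.card n := by exact_mod_cast Fintype.card_pos
  have hsq := sq_sum_sum_erase_le fun i j => ‖P i j‖
  have hoff := card_mul_sum_sum_erase_norm_sq_le hH hP
  refine (le_abs_self _).trans (Real.abs_le_sqrt ?_)
  nlinarith

end Matrix

theorem totalCoherence_le {N M : ℕ}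
    (Ψ : Matrix (Fin N) (Fin M) ℂ) (hΨ : Ψ * Ψᴴ = 1) :
    totalCoherence Ψ ≤ Real.sqrt ((N : ℝ) * ((M : ℝ) - (N : ℝ)) * ((M : ℝ) - 1)) := by
  have hidem : Ψᴴ * Ψ * (Ψᴴ * Ψ) = Ψᴴ * Ψ := by
    rw [Matrix.mul_assoc, ← Matrix.mul_assoc Ψ, hΨ, Matrix.one_mul]
  have htrace : RCLike.re (Ψᴴ * Ψ).trace = N := by
    rw [trace_mul_comm, hΨ, trace_one, Fintype.card_fin]
    simp
  have hbound :=
    sum_sum_erase_norm_le_of_isHermitian_of_mul_self (isHermitian_conjTranspose_mul_self Ψ) hidem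
  rwa [htrace, Fintype.card_fin] at hbound
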